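/- For k ≥ 0 and n ∈ Z, the polynomial gbinom(x,k) = x(x-[1]_q)···(x-[k-1]_q)/(q^{k(k-1)/2}[k]_q!) satisfies gbinom([n]_q, k) = [n choose k]_q, the Gaussian binomial coefficient. -/
import Mathlib


open Polynomial Finset

noncomputable section

/-- The q-integer `[n]_q = (q^n - 1)/(q - 1)` for `n ∈ ℤ`, in `ℚ(q)`. -/
def qInt (n : ℤ) : RatFunc ℚ := (RatFunc.X ^ n - 1) / (RatFunc.X - 1)

/-- The polynomial `gbinom(x, k) = x(x-[1]_q)⋯(x-[k-1]_q) / (q^{C(k,2)} [k]_q!)`. -/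
def gbinomPoly (k : ℕ) : Polynomial (RatFunc ℚ) :=
  Polynomial.C ((RatFunc.X ^ (k.choose 2) * ∏ i ∈ Finset.range k, qInt ((i : ℤ) + 1))⁻¹) *
    ∏ i ∈ Finset.range k, (Polynomial.X - Polynomial.C (qInt (i : ℤ)))

lemma algMap_pow_sub_one_ne (m : ℕ) (hm : m ≠ 0) :
    (RatFunc.X : RatFunc ℚ) ^ m - 1 ≠ 0 := by
  have h : (RatFunc.X : RatFunc ℚ) ^ m - 1 =
      algebraMap (Polynomial ℚ) (RatFunc ℚ) (Polynomial.X ^ m - 1) := by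
    simp [map_sub, map_pow, RatFunc.algebraMap_X]
  rw [h]
  apply RatFunc.algebraMap_ne_zero
  intro hc
  have h2 := congrArg Polynomial.natDegree hc
  rw [show (1 : Polynomial ℚ) = Polynomial.C 1 by simp] at h2
  rw [Polynomial.natDegree_X_pow_sub_C] at h2
  simp at h2
  exact hm h2

lemma hX1 : (RatFunc.X : RatFunc ℚ) - 1 ≠ 0 := by
  have := algMap_pow_sub_one_ne 1 one_ne_zero
  simpa using this

lemma qInt_sub (n : ℤ) (b : ℕ) :
    qInt n - qInt (b : ℤ) =
      (RatFunc.X : RatFunc ℚ) ^ b * (RatFunc.X ^ (n - (b:ℤ)) - 1) / (RatFunc.X - 1) := by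
  unfold qInt
  rw [div_sub_div_same]
  congr 1
  rw [mul_sub, mul_one, ← zpow_natCast (RatFunc.X : RatFunc ℚ) b,
    ← zpow_add₀ (RatFunc.X_ne_zero) (b:ℤ) (n - b)]
  ring_nf

/-- For `k ≥ 0` and `n ∈ ℤ`, `gbinom([n]_q, k)` equals the Gaussian binomial
coefficient `[n choose k]_q = ∏_{i=0}^{k-1} (q^{n-i}-1)/(q^{k-i}-1)`. -/
theorem gbinomPoly_eval_qInt (k : ℕ) (n : ℤ) :
    (gbinomPoly k).eval (qInt n) =
      ∏ i ∈ Finset.range k,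
        (RatFunc.X ^ (n - (i : ℤ)) - 1) / (RatFunc.X ^ ((k : ℤ) - (i : ℤ)) - 1) := by
  have hXne : (RatFunc.X : RatFunc ℚ) ≠ 0 := RatFunc.X_ne_zero
  have hrefl : ∏ i ∈ range k, ((RatFunc.X : RatFunc ℚ) ^ ((k:ℤ) - (i:ℤ)) - 1)
      = ∏ i ∈ range k, ((RatFunc.X : RatFunc ℚ) ^ (i+1) - 1) := by
    rw [← Finset.prod_range_reflect
      (fun i => (RatFunc.X : RatFunc ℚ) ^ ((k:ℤ) - (i:ℤ)) - 1) k]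
    refine Finset.prod_congr rfl fun i hi => ?_
    rw [Finset.mem_range] at hi
    have h : (k:ℤ) - ((k - 1 - i : ℕ):ℤ) = ((i+1 : ℕ):ℤ) := by omega
    simp only [h, zpow_natCast]
  have h1 : ∏ i ∈ range k, qInt ((i:ℤ)+1)
      = (∏ i ∈ range k, ((RatFunc.X : RatFunc ℚ) ^ (i+1) - 1)) / (RatFunc.X - 1)^k := by
    have step : ∏ i ∈ range k, qInt ((i:ℤ)+1)
        = ∏ i ∈ range k, (((RatFunc.X : RatFunc ℚ) ^ (i+1) - 1) / (RatFunc.X - 1)) := by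
      refine Finset.prod_congr rfl fun i _ => ?_
      unfold qInt
      rw [show ((i:ℤ)+1) = ((i+1:ℕ):ℤ) by push_cast; ring, zpow_natCast]
    rw [step, Finset.prod_div_distrib, Finset.prod_const, Finset.card_range]
  have h2 : ∏ i ∈ range k, (qInt n - qInt (i:ℤ))
      = RatFunc.X ^ k.choose 2 *
        (∏ i ∈ range k, ((RatFunc.X : RatFunc ℚ) ^ (n - (i:ℤ)) - 1)) / (RatFunc.X - 1)^k := by
    have step : ∏ i ∈ range k, (qInt n - qInt (i:ℤ))
        = ∏ i ∈ range k,
            ((RatFunc.X : RatFunc ℚ) ^ i * (RatFunc.X ^ (n - (i:ℤ)) - 1) / (RatFunc.X - 1)) :=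
      Finset.prod_congr rfl fun i _ => qInt_sub n i
    rw [step]
    rw [Finset.prod_div_distrib, Finset.prod_const, Finset.prod_mul_distrib,
      Finset.prod_pow_eq_pow_sum, Finset.sum_range_id, ← Nat.choose_two_right, Finset.card_range]
  rw [gbinomPoly]
  simp only [Polynomial.eval_mul, Polynomial.eval_C, Polynomial.eval_prod,
    Polynomial.eval_sub, Polynomial.eval_X]
  rw [h1, h2, Finset.prod_div_distrib, hrefl]
  have hN1 : (∏ i ∈ range k, ((RatFunc.X : RatFunc ℚ) ^ (i+1) - 1)) ≠ 0 :=
    Finset.prod_ne_zero_iff.mpr fun i _ => algMap_pow_sub_one_ne (i+1) (Nat.succ_ne_zero i)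
  have hXc : (RatFunc.X : RatFunc ℚ) ^ k.choose 2 ≠ 0 := pow_ne_zero _ hXne
  have hX1k : ((RatFunc.X : RatFunc ℚ) - 1)^k ≠ 0 := pow_ne_zero _ hX1
  field_simp
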